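/- With m_k ≥ 2^{3k/2}π^{-k}e^{-kπ} and M_j(k) = 2^{3k/2}π^{-k}(2|j|-1)^{-3k/2}e^{-(2|j|-1)kπ} for |j| > 1, one has Σ_{|j|>1} M_j(k)/m_k ≤ (2/3)^k Σ_{|j|>1} e^{-2π(|j|-1)} ≤ (4/3)/(e^{2π}-1) for every k ≥ 1; hence (together with the |j| ≤ 1 terms) Σ_{j≠0} M_j(k)/m_k is bounded uniformly in k. -/
import Mathlib


open Filter Real

noncomputable section

/-- `M_j(k) = 2^{3k/2} π^{-k} (2|j|-1)^{-3k/2} e^{-(2|j|-1)kπ}` (for `|j| > 1`). -/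
def Mk (k : ℕ) (j : ℤ) : ℝ :=
  (2 : ℝ) ^ ((3 * (k : ℝ)) / 2) * Real.pi ^ (-(k : ℝ)) *
    (2 * |(j : ℝ)| - 1) ^ (-(3 * (k : ℝ)) / 2) *
    Real.exp (-(2 * |(j : ℝ)| - 1) * (k : ℝ) * Real.pi)

def gfun : ℤ → ℝ := fun j =>
  if 0 ≤ j then Real.exp (-(2 * Real.pi) * ((j : ℝ) + 1))
  else Real.exp (-(2 * Real.pi) * (-(j : ℝ)))

lemma gfun_nonneg (j : ℤ) : 0 ≤ gfun j := by
  unfold gfun; split <;> positivity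

lemma hasSum_gfun :
    HasSum gfun (2 * (Real.exp (-(2 * Real.pi)) * (1 - Real.exp (-(2 * Real.pi)))⁻¹)) := by
  set r := Real.exp (-(2 * Real.pi)) with hr
  have h0 : (0:ℝ) ≤ r := le_of_lt (Real.exp_pos _)
  have h1 : r < 1 := by
    rw [hr, Real.exp_lt_one_iff]
    nlinarith [Real.pi_pos]
  have hgeo : HasSum (fun n : ℕ => r * r ^ n) (r * (1 - r)⁻¹) :=
    (hasSum_geometric_of_lt_one h0 h1).mul_left r
  have key : ∀ n : ℕ, Real.exp (-(2 * Real.pi) * ((n : ℝ) + 1)) = r * r ^ n := by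
    intro n
    rw [hr, ← Real.exp_nat_mul, ← Real.exp_add]
    ring_nf
  have hpos : HasSum (fun n : ℕ => gfun n) (r * (1 - r)⁻¹) := by
    have : (fun n : ℕ => gfun n) = fun n : ℕ => r * r ^ n := by
      funext n
      simp only [gfun, Int.natCast_nonneg, if_true, Int.cast_natCast]
      exact key n
    rw [this]; exact hgeo
  have hneg : HasSum (fun n : ℕ => gfun (-(n + 1))) (r * (1 - r)⁻¹) := by
    have : (fun n : ℕ => gfun (-(n + 1))) = fun n : ℕ => r * r ^ n := by
      funext n
      have hlt : ¬ (0 ≤ -((n : ℤ) + 1)) := by omega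
      simp only [gfun, hlt, if_false]
      rw [← key n]
      congr 1
      push_cast
      ring
    rw [this]; exact hgeo
  have := hpos.of_nat_of_neg_add_one hneg
  convert this using 1
  ring

lemma tsum_gfun :
    ∑' j : ℤ, gfun j = 2 / (Real.exp (2 * Real.pi) - 1) := by
  rw [hasSum_gfun.tsum_eq]
  have hE : 1 < Real.exp (2 * Real.pi) := by
    rw [Real.one_lt_exp_iff]
    positivity
  have hE0 : Real.exp (2 * Real.pi) ≠ 0 := (Real.exp_pos _).ne'
  rw [show (-(2 * Real.pi)) = -(2 * Real.pi) from rfl, Real.exp_neg]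
  field_simp

def efun : {j : ℤ // 1 < |j|} → ℤ := fun j => if 0 < j.1 then j.1 - 2 else j.1 + 1

lemma abs_cases' (j : {j : ℤ // 1 < |j|}) : 2 ≤ j.1 ∨ j.1 ≤ -2 := by
  have := j.2
  rw [Int.abs_eq_natAbs] at this
  omega

lemma efun_injective : Function.Injective efun := by
  intro a b hab
  have ha := abs_cases' a
  have hb := abs_cases' b
  unfold efun at hab
  ext
  split at hab <;> split at hab <;> omega

lemma f_eq_g (j : {j : ℤ // 1 < |j|}) :
    Real.exp (-(2 * Real.pi) * (|((j : ℤ) : ℝ)| - 1)) = gfun (efun j) := by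
  rcases abs_cases' j with h | h
  · have h0 : (0:ℤ) < j.1 := by omega
    have h0' : (0:ℤ) ≤ j.1 - 2 := by omega
    have habs : |((j.1 : ℤ) : ℝ)| = (j.1 : ℝ) := by
      rw [abs_of_pos]; exact_mod_cast h0
    simp only [efun, gfun, if_pos h0, if_pos h0', habs]
    push_cast
    ring_nf
  · have h0 : ¬ (0:ℤ) < j.1 := by omega
    have h0' : ¬ (0:ℤ) ≤ j.1 + 1 := by omega
    have habs : |((j.1 : ℤ) : ℝ)| = -(j.1 : ℝ) := by
      rw [abs_of_neg]; exact_mod_cast (by omega : j.1 < 0)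
    simp only [efun, gfun, if_neg h0, if_neg h0', habs]
    push_cast
    ring_nf

lemma summable_f :
    Summable (fun j : {j : ℤ // 1 < |j|} => Real.exp (-(2 * Real.pi) * (|((j : ℤ) : ℝ)| - 1))) := by
  have : Summable (gfun ∘ efun) := hasSum_gfun.summable.comp_injective efun_injective
  exact this.congr fun j => (f_eq_g j).symm

lemma tsum_f_le :
    ∑' j : {j : ℤ // 1 < |j|}, Real.exp (-(2 * Real.pi) * (|((j : ℤ) : ℝ)| - 1))
      ≤ 2 / (Real.exp (2 * Real.pi) - 1) := by
  rw [← tsum_gfun]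
  exact Summable.tsum_le_tsum_of_inj efun efun_injective (fun c _ => gfun_nonneg c)
    (fun j => le_of_eq (f_eq_g j)) summable_f hasSum_gfun.summable


lemma abs_two_le (j : {j : ℤ // 1 < |j|}) : 2 ≤ |((j : ℤ) : ℝ)| := by
  rw [← Int.cast_abs]
  exact_mod_cast j.2

lemma Mk_le (k : ℕ) (hk : 1 ≤ k) (j : {j : ℤ // 1 < |j|}) :
    Mk k j.1 ≤ ((2 : ℝ) ^ ((3 * (k : ℝ)) / 2) * Real.pi ^ (-(k : ℝ)) *
      Real.exp (-(k : ℝ) * Real.pi) * (2 / 3 : ℝ) ^ k) *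
      Real.exp (-(2 * Real.pi) * (|((j : ℤ) : ℝ)| - 1)) := by
  set a := |((j.1 : ℤ) : ℝ)| with ha_def
  have ha : 2 ≤ a := abs_two_le j
  have hk1 : (1 : ℝ) ≤ (k : ℝ) := by exact_mod_cast hk
  have hknn : (0 : ℝ) ≤ (k : ℝ) := by positivity
  have hexp_nonpos : -(3 * (k : ℝ)) / 2 ≤ 0 := by linarith
  have hB : (2 * a - 1) ^ (-(3 * (k : ℝ)) / 2) ≤ (2 / 3 : ℝ) ^ k := by
    calc (2 * a - 1) ^ (-(3 * (k : ℝ)) / 2)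
        ≤ (3 : ℝ) ^ (-(3 * (k : ℝ)) / 2) :=
          Real.rpow_le_rpow_of_nonpos (by norm_num) (by linarith) hexp_nonpos
      _ ≤ (3 : ℝ) ^ (-(k : ℝ)) :=
          Real.rpow_le_rpow_of_exponent_le (by norm_num) (by linarith)
      _ = ((1 : ℝ) / 3) ^ k := by
          rw [Real.rpow_neg (by norm_num), Real.rpow_natCast, one_div, inv_pow]
      _ ≤ (2 / 3 : ℝ) ^ k := by
          apply pow_le_pow_left₀ (by norm_num) (by norm_num)
  have hC : Real.exp (-(2 * a - 1) * (k : ℝ) * Real.pi)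
      ≤ Real.exp (-(k : ℝ) * Real.pi) * Real.exp (-(2 * Real.pi) * (a - 1)) := by
    rw [← Real.exp_add]
    apply Real.exp_le_exp.mpr
    nlinarith [Real.pi_pos,
      mul_nonneg (mul_nonneg (by linarith : (0:ℝ) ≤ a - 1) (by linarith : (0:ℝ) ≤ (k:ℝ) - 1))
        Real.pi_pos.le]
  have hA : (0 : ℝ) ≤ (2 : ℝ) ^ ((3 * (k : ℝ)) / 2) * Real.pi ^ (-(k : ℝ)) := by positivity
  calc Mk k j.1
      = (2 : ℝ) ^ ((3 * (k : ℝ)) / 2) * Real.pi ^ (-(k : ℝ)) *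
          ((2 * a - 1) ^ (-(3 * (k : ℝ)) / 2)) *
          Real.exp (-(2 * a - 1) * (k : ℝ) * Real.pi) := rfl
    _ ≤ (2 : ℝ) ^ ((3 * (k : ℝ)) / 2) * Real.pi ^ (-(k : ℝ)) *
          ((2 / 3 : ℝ) ^ k) *
          (Real.exp (-(k : ℝ) * Real.pi) * Real.exp (-(2 * Real.pi) * (a - 1))) := by
        apply mul_le_mul
        · exact mul_le_mul_of_nonneg_left hB hA
        · exact hC
        · positivity
        · positivity
    _ = ((2 : ℝ) ^ ((3 * (k : ℝ)) / 2) * Real.pi ^ (-(k : ℝ)) *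
          Real.exp (-(k : ℝ) * Real.pi) * (2 / 3 : ℝ) ^ k) *
          Real.exp (-(2 * Real.pi) * (a - 1)) := by ring

/-- with `m_k ≥ 2^{3k/2} π^{-k} e^{-kπ}`, one has
`Σ_{|j|>1} M_j(k)/m_k ≤ (2/3)^k Σ_{|j|>1} e^{-2π(|j|-1)} ≤ (4/3)/(e^{2π}-1)` for every
`k ≥ 1`; hence, together with the `|j| = 1` terms (each equal to `m_k`),
`Σ_{j≠0} M_j(k)/m_k` is bounded uniformly in `k`. -/
theorem multiquadric_H2 (k : ℕ) (hk : 1 ≤ k) (m : ℝ)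
    (hm : (2 : ℝ) ^ ((3 * (k : ℝ)) / 2) * Real.pi ^ (-(k : ℝ)) *
      Real.exp (-(k : ℝ) * Real.pi) ≤ m) :
    (∑' j : {j : ℤ // 1 < |j|}, Mk k j.1) / m ≤
      (2 / 3 : ℝ) ^ k *
        ∑' j : {j : ℤ // 1 < |j|}, Real.exp (-(2 * Real.pi) * (|((j : ℤ) : ℝ)| - 1)) ∧
    (2 / 3 : ℝ) ^ k *
        (∑' j : {j : ℤ // 1 < |j|}, Real.exp (-(2 * Real.pi) * (|((j : ℤ) : ℝ)| - 1))) ≤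
      (4 / 3) / (Real.exp (2 * Real.pi) - 1) ∧
    (2 * m + ∑' j : {j : ℤ // 1 < |j|}, Mk k j.1) / m ≤
      2 + (4 / 3) / (Real.exp (2 * Real.pi) - 1) := by
  set T := ∑' j : {j : ℤ // 1 < |j|}, Real.exp (-(2 * Real.pi) * (|((j : ℤ) : ℝ)| - 1))
    with hT_def
  set m' := (2 : ℝ) ^ ((3 * (k : ℝ)) / 2) * Real.pi ^ (-(k : ℝ)) *
    Real.exp (-(k : ℝ) * Real.pi) with hm'_def
  have hm'pos : 0 < m' := by rw [hm'_def]; positivity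
  have hmpos : 0 < m := lt_of_lt_of_le hm'pos hm
  have hTnn : 0 ≤ T := tsum_nonneg fun j => (Real.exp_pos _).le
  have hT2 : T ≤ 2 / (Real.exp (2 * Real.pi) - 1) := tsum_f_le
  have hSummB : Summable (fun j : {j : ℤ // 1 < |j|} =>
      (m' * (2 / 3 : ℝ) ^ k) * Real.exp (-(2 * Real.pi) * (|((j : ℤ) : ℝ)| - 1))) :=
    summable_f.mul_left _
  have hle : ∀ j : {j : ℤ // 1 < |j|}, Mk k j.1 ≤
      (m' * (2 / 3 : ℝ) ^ k) * Real.exp (-(2 * Real.pi) * (|((j : ℤ) : ℝ)| - 1)) :=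
    fun j => Mk_le k hk j
  have hSumMk : Summable (fun j : {j : ℤ // 1 < |j|} => Mk k j.1) := by
    apply Summable.of_nonneg_of_le _ hle hSummB
    intro j
    have ha : 2 ≤ |((j.1 : ℤ) : ℝ)| := abs_two_le j
    have h1 : (0 : ℝ) ≤ 2 * |((j.1 : ℤ) : ℝ)| - 1 := by linarith
    unfold Mk
    positivity
  have hS : (∑' j : {j : ℤ // 1 < |j|}, Mk k j.1) ≤ (m' * (2 / 3 : ℝ) ^ k) * T := by
    calc (∑' j : {j : ℤ // 1 < |j|}, Mk k j.1)
        ≤ ∑' j : {j : ℤ // 1 < |j|},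
            (m' * (2 / 3 : ℝ) ^ k) * Real.exp (-(2 * Real.pi) * (|((j : ℤ) : ℝ)| - 1)) :=
          Summable.tsum_le_tsum hle hSumMk hSummB
      _ = (m' * (2 / 3 : ℝ) ^ k) * T := tsum_mul_left
  have claim1 : (∑' j : {j : ℤ // 1 < |j|}, Mk k j.1) / m ≤ (2 / 3 : ℝ) ^ k * T := by
    rw [div_le_iff₀ hmpos]
    calc (∑' j : {j : ℤ // 1 < |j|}, Mk k j.1) ≤ (m' * (2 / 3 : ℝ) ^ k) * T := hS
      _ = m' * ((2 / 3 : ℝ) ^ k * T) := by ring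
      _ ≤ m * ((2 / 3 : ℝ) ^ k * T) := by
          apply mul_le_mul_of_nonneg_right hm (by positivity)
      _ = (2 / 3 : ℝ) ^ k * T * m := by ring
  have claim2 : (2 / 3 : ℝ) ^ k * T ≤ (4 / 3) / (Real.exp (2 * Real.pi) - 1) := by
    have hE : 1 < Real.exp (2 * Real.pi) := by
      nlinarith [Real.add_one_le_exp (2 * Real.pi), Real.pi_pos]
    have h23 : (2 / 3 : ℝ) ^ k ≤ 2 / 3 := by
      calc (2 / 3 : ℝ) ^ k ≤ (2 / 3 : ℝ) ^ 1 :=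
            pow_le_pow_of_le_one (by norm_num) (by norm_num) hk
        _ = 2 / 3 := pow_one _
    calc (2 / 3 : ℝ) ^ k * T ≤ (2 / 3) * (2 / (Real.exp (2 * Real.pi) - 1)) :=
          mul_le_mul h23 hT2 hTnn (by norm_num)
      _ = (4 / 3) / (Real.exp (2 * Real.pi) - 1) := by ring
  refine ⟨claim1, claim2, ?_⟩
  have heq : (2 * m + ∑' j : {j : ℤ // 1 < |j|}, Mk k j.1) / m
      = 2 + (∑' j : {j : ℤ // 1 < |j|}, Mk k j.1) / m := by
    rw [add_div, mul_div_assoc, div_self hmpos.ne', mul_one]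
  rw [heq]
  linarith [claim1, claim2]
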